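/- arXiv:2101.02238 — 3 statements merged into one kernel-verified Lean document; each statement's English description precedes it below -/
import Mathlib

section
/- Fix F ∈ 𝒫_{m,G} and a Lipschitz continuous speed function V : [0,∞) → (0,∞). Then for every starting point z₀ ∈ C(𝒯), the Picard sequence defined by z_l := 𝒰(z_{l−1}, F) for l ≥ 1 converges in the uniform norm on C(𝒯) to the unique z* ∈ C(𝒯) satisfying z*(t) = ∫₀ᵗ V(F(S_s(z*))) ds for all t ∈ 𝒯. -/
open MeasureTheory Set Filter

noncomputable section

/-- `Sset Td Xs z t` is the set `S_t(z)` of pairs (departure time, trip length) of the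
agents travelling at time `t` in a system with characteristic travel distance `z`:
`S_t(z) = {(τ, ξ) : τ ∈ [0,t] ∩ 𝒯_d, ξ ∈ (z(t) − z(τ), ∞) ∩ 𝒳}`. -/
def Sset (Td Xs : Set ℝ) (z : ℝ → ℝ) (t : ℝ) : Set (ℝ × ℝ) :=
  {p : ℝ × ℝ | p.1 ∈ Set.Icc 0 t ∩ Td ∧ p.2 ∈ Set.Ioi (z t - z p.1) ∩ Xs}

/-- `memP Td Xs Ta m G F` says that `F ∈ 𝒫_{m,G}`: `F` is a Borel probability measure
on `𝒯_d × 𝒳` with `F(B) ≤ G·λ₂(B)` for every Borel `B` and whose `𝒳`-marginal agrees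
with that of the demand profile `m`, i.e. `F(𝒯_d × Q) = m(Q × 𝒯_a)` for all Borel `Q`. -/
def memP (Td Xs Ta : Set ℝ) (m : Measure (ℝ × ℝ)) (G : ℝ) (F : Measure (ℝ × ℝ)) : Prop :=
  IsProbabilityMeasure F ∧ F ((Td ×ˢ Xs)ᶜ) = 0 ∧
    (∀ B : Set (ℝ × ℝ), MeasurableSet B → F B ≤ ENNReal.ofReal G * volume B) ∧
    ∀ Q : Set ℝ, MeasurableSet Q → F (Td ×ˢ Q) = m (Q ×ˢ Ta)

/-- The map `𝒰(z, F)(t) = ∫₀ᵗ V(F(S_s(z))) ds`. -/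
def Umap (Td Xs : Set ℝ) (V : ℝ → ℝ) (F : Measure (ℝ × ℝ)) (z : ℝ → ℝ) (t : ℝ) : ℝ :=
  ∫ s in (0:ℝ)..t, V ((F (Sset Td Xs z s)).toReal)

/-- The distance associated with the norm `‖u‖_M = sup_{t ∈ [0,Tmax]} e^{−Mt}|u(t)|`. -/
def dM (M Tmax : ℝ) (u w : ℝ → ℝ) : ℝ :=
  ⨆ t : Set.Icc (0:ℝ) Tmax, Real.exp (-(M * t.1)) * |u t.1 - w t.1|

/-
The bound `F ≤ G • λ₂` turns every perturbation of `S_s(z)` into a thin region: if `|z − w| ≤ δ`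
on `[0, s]`, then `S_s(z)` and `S_s(w)` differ by a band of height `2δ` over `[0, s]`, so
`|F(S_s(z)) − F(S_s(w))| ≤ 2Gsδ`; moving `s` instead adds a thin rectangle, which gives continuity
in `s`. Hence the integrand of `𝒰(·, F)` is continuous and depends Lipschitz-continuously on the
past of `z`, making `𝒰(·, F)` a Volterra operator. For such operators induction gives
`|𝒰ˡz − 𝒰ˡw| ≤ C (Kt)ˡ / l!` on `[0, T]`; this is summable, so the Picard iterates converge
uniformly, and it tends to `0`, so the fixed point is unique.
-/

open scoped NNReal ENNReal Topology

theorem volume_band (f : ℝ → ℝ) (hf : Measurable f) {s : Set ℝ} (hs : MeasurableSet s) (δ : ℝ) :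
    volume {p : ℝ × ℝ | p.1 ∈ s ∧ p.2 ∈ Ioc (f p.1) (f p.1 + δ)}
      = volume s * ENNReal.ofReal δ := by
  set band := {p : ℝ × ℝ | p.1 ∈ s ∧ p.2 ∈ Ioc (f p.1) (f p.1 + δ)}
  rw [Measure.volume_eq_prod, Measure.prod_apply
    (measurableSet_region_between_oc hf (hf.add_const δ) hs)]
  have hfiber : (fun τ => volume (Prod.mk τ ⁻¹' band)) = s.indicator fun _ => ENNReal.ofReal δ := by
    ext τ
    by_cases hτ : τ ∈ s
    · have hslice : Prod.mk τ ⁻¹' band = Ioc (f τ) (f τ + δ) := by ext; simp [band, hτ]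
      rw [indicator_of_mem hτ, hslice, Real.volume_Ioc, add_sub_cancel_left]
    · simp [band, hτ, Set.preimage]
  rw [hfiber, lintegral_indicator_const hs, mul_comm]

theorem measureReal_le_mul_volumeReal {F : Measure (ℝ × ℝ)} {G : ℝ≥0}
    (hFG : F ≤ (G : ℝ≥0∞) • volume) {B : Set (ℝ × ℝ)} (hB : volume B ≠ ∞) :
    F.real B ≤ G * volume.real B := by
  have h := Measure.le_iff'.1 hFG B
  rw [Measure.smul_apply, smul_eq_mul] at h
  simpa [measureReal_def, ENNReal.toReal_mul] using
    ENNReal.toReal_mono (ENNReal.mul_ne_top ENNReal.coe_ne_top hB) h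

theorem Sset_subset_union (Td Xs : Set ℝ) {z w : ℝ → ℝ} {s s' δ : ℝ}
    (h : ∀ τ ∈ Icc 0 s', w s' - w τ ≤ z s - z τ + δ) :
    Sset Td Xs z s ⊆ Sset Td Xs w s' ∪ (Ioc s' s ×ˢ Xs ∪
      {p : ℝ × ℝ | p.1 ∈ Icc 0 s' ∧ p.2 ∈ Ioc (z s - z p.1) (z s - z p.1 + δ)}) := by
  rintro ⟨τ, ξ⟩ ⟨⟨⟨hτ0, hτs⟩, hτd⟩, hξz, hξx⟩
  by_cases hτs' : τ ≤ s'
  · by_cases hξw : w s' - w τ < ξ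
    · exact Or.inl ⟨⟨⟨hτ0, hτs'⟩, hτd⟩, hξw, hξx⟩
    · exact Or.inr (Or.inr ⟨⟨hτ0, hτs'⟩, hξz, (not_lt.1 hξw).trans (h τ ⟨hτ0, hτs'⟩)⟩)
  · exact Or.inr (Or.inl ⟨⟨not_le.1 hτs', hτs⟩, hξx⟩)

section DensityBound

variable {F : Measure (ℝ × ℝ)} [IsFiniteMeasure F] {G : ℝ≥0}

theorem measureReal_Sset_le (hFG : F ≤ (G : ℝ≥0∞) • volume) (Td : Set ℝ) {Xs : Set ℝ}
    (hXs : volume Xs ≠ ∞) {z w : ℝ → ℝ} (hz : Continuous z) {s s' δ : ℝ} (hδ : 0 ≤ δ)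
    (h : ∀ τ ∈ Icc 0 s', w s' - w τ ≤ z s - z τ + δ) :
    F.real (Sset Td Xs z s) ≤ F.real (Sset Td Xs w s')
      + G * (max (s - s') 0 * volume.real Xs + max s' 0 * δ) := by
  set band := {p : ℝ × ℝ | p.1 ∈ Icc 0 s' ∧ p.2 ∈ Ioc (z s - z p.1) (z s - z p.1 + δ)}
  have hband : volume band = volume (Icc 0 s') * ENNReal.ofReal δ :=
    volume_band (fun τ => z s - z τ) (by fun_prop) measurableSet_Icc δ
  have hrect : volume (Ioc s' s ×ˢ Xs) = volume (Ioc s' s) * volume Xs := by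
    rw [Measure.volume_eq_prod, Measure.prod_prod]
  calc F.real (Sset Td Xs z s)
      ≤ F.real (Sset Td Xs w s') + (F.real (Ioc s' s ×ˢ Xs) + F.real band) :=
        (measureReal_mono (Sset_subset_union Td Xs h)).trans
          ((measureReal_union_le _ _).trans (by gcongr; exact measureReal_union_le _ _))
    _ ≤ F.real (Sset Td Xs w s')
          + (G * volume.real (Ioc s' s ×ˢ Xs) + G * volume.real band) := by
        gcongr
        · exact measureReal_le_mul_volumeReal hFG (by simp [hrect, ENNReal.mul_ne_top, hXs])
        · exact measureReal_le_mul_volumeReal hFG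
            (by rw [hband]; exact ENNReal.mul_ne_top measure_Icc_lt_top.ne ENNReal.ofReal_ne_top)
    _ = F.real (Sset Td Xs w s') + G * (max (s - s') 0 * volume.real Xs + max s' 0 * δ) := by
        simp only [measureReal_def, hrect, hband, ENNReal.toReal_mul, ENNReal.toReal_ofReal hδ]
        simp only [← measureReal_def, Real.volume_real_Ioc, Real.volume_real_Icc, sub_zero]
        ring

theorem abs_measureReal_Sset_sub_le (hFG : F ≤ (G : ℝ≥0∞) • volume) (Td : Set ℝ) {Xs : Set ℝ}
    (hXs : volume Xs ≠ ∞) {z w : ℝ → ℝ} (hz : Continuous z) (hw : Continuous w) {s δ : ℝ}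
    (hs : 0 ≤ s) (hzw : ∀ τ ∈ Icc 0 s, |z τ - w τ| ≤ δ) :
    |F.real (Sset Td Xs z s) - F.real (Sset Td Xs w s)| ≤ 2 * G * s * δ := by
  have hδ : 0 ≤ δ := (abs_nonneg _).trans (hzw s ⟨hs, le_rfl⟩)
  have hbound : ∀ {u v : ℝ → ℝ}, Continuous u → (∀ τ ∈ Icc 0 s, |u τ - v τ| ≤ δ) →
      F.real (Sset Td Xs u s) ≤ F.real (Sset Td Xs v s) + 2 * G * s * δ := by
    intro u v hu huv
    have h := measureReal_Sset_le hFG Td hXs hu (w := v) (s' := s) (δ := 2 * δ) (by positivity)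
      fun τ hτ => by linarith [abs_le.1 (huv τ hτ), abs_le.1 (huv s ⟨hs, le_rfl⟩)]
    simpa [max_eq_left hs, mul_assoc, mul_left_comm] using h
  exact abs_sub_le_iff.2 ⟨by linarith [hbound hz hzw], by
    linarith [hbound hw fun τ hτ => (abs_sub_comm (w τ) (z τ)).trans_le (hzw τ hτ)]⟩

theorem continuous_measureReal_Sset (hFG : F ≤ (G : ℝ≥0∞) • volume) (Td : Set ℝ) {Xs : Set ℝ}
    (hXs : volume Xs ≠ ∞) {z : ℝ → ℝ} (hz : Continuous z) :
    Continuous fun s => F.real (Sset Td Xs z s) := by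
  set b : ℝ → ℝ → ℝ := fun s s' =>
    G * (max (s - s') 0 * volume.real Xs + max s' 0 * |z s - z s'|)
  have hstep : ∀ s s', F.real (Sset Td Xs z s) ≤ F.real (Sset Td Xs z s') + b s s' :=
    fun s s' => measureReal_Sset_le hFG Td hXs hz (abs_nonneg _) fun τ _ => by
      linarith [neg_abs_le (z s - z s')]
  have hb : ∀ s s', 0 ≤ b s s' := fun s s' => by positivity
  refine continuous_iff_continuousAt.2 fun s₀ => tendsto_iff_dist_tendsto_zero.2 ?_
  have hbound : Tendsto (fun s => b s s₀ + b s₀ s) (𝓝 s₀) (𝓝 0) := by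
    simpa [b] using (show Continuous fun s => b s s₀ + b s₀ s by fun_prop).tendsto s₀
  refine squeeze_zero (fun _ => dist_nonneg) (fun s => ?_) hbound
  rw [Real.dist_eq, abs_sub_le_iff]
  constructor <;> linarith [hstep s s₀, hstep s₀ s, hb s s₀, hb s₀ s]

end DensityBound

theorem exists_tendstoUniformlyOn_of_norm_sub_le {α E : Type*} [NormedAddCommGroup E]
    [CompleteSpace E] {f : ℕ → α → E} {u : ℕ → ℝ} (hu : Summable u) {s : Set α}
    (hfu : ∀ n, ∀ x ∈ s, ‖f (n + 1) x - f n x‖ ≤ u n) :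
    ∃ g, TendstoUniformlyOn f g atTop s := by
  refine ⟨fun x => f 0 x + ∑' n, (f (n + 1) x - f n x), ?_⟩
  have hsum := tendstoUniformlyOn_tsum_nat hu fun n x hx => hfu n x hx
  rw [Metric.tendstoUniformlyOn_iff] at hsum ⊢
  intro ε hε
  filter_upwards [hsum ε hε] with N hN x hx
  have h := hN x hx
  rw [Finset.sum_range_sub (fun n => f n x), dist_eq_norm] at h
  rw [dist_eq_norm]
  convert h using 2
  abel

theorem integral_mul_pow_div_factorial (K C t : ℝ) (n : ℕ) :
    ∫ s in (0 : ℝ)..t, K * (C * (K * s) ^ n / n.factorial)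
      = C * (K * t) ^ (n + 1) / (n + 1).factorial := by
  simp_rw [mul_pow, show ∀ s : ℝ, K * (C * (K ^ n * s ^ n) / n.factorial)
    = K * C * K ^ n / n.factorial * s ^ n from fun s => by ring]
  rw [intervalIntegral.integral_const_mul, integral_pow, Nat.factorial_succ]
  push_cast
  field_simp
  ring

theorem exists_nonneg_abs_sub_le {z w : ℝ → ℝ} (hz : Continuous z) (hw : Continuous w) (T : ℝ) :
    ∃ C, 0 ≤ C ∧ ∀ t ∈ Icc 0 T, |z t - w t| ≤ C := by
  obtain ⟨C, hC⟩ := isCompact_Icc.exists_bound_of_continuousOn (hz.sub hw).continuousOn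
  exact ⟨max C 0, le_max_right _ _, fun t ht => (hC t ht).trans (le_max_left _ _)⟩

structure IsVolterraLipschitz (φ : (ℝ → ℝ) → ℝ → ℝ) (T K : ℝ) : Prop where
  nonneg : 0 ≤ K
  continuous : ∀ z, Continuous z → Continuous (φ z)
  abs_sub_le : ∀ z w, Continuous z → Continuous w → ∀ s ∈ Icc 0 T, ∀ δ,
    (∀ τ ∈ Icc 0 s, |z τ - w τ| ≤ δ) → |φ z s - φ w s| ≤ K * δ

namespace IsVolterraLipschitz

variable {φ : (ℝ → ℝ) → ℝ → ℝ} {T K : ℝ}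

theorem continuous_primitive (hφ : IsVolterraLipschitz φ T K) {z : ℝ → ℝ} (hz : Continuous z) :
    Continuous fun t => ∫ s in (0 : ℝ)..t, φ z s :=
  intervalIntegral.continuous_primitive (fun _ _ => (hφ.continuous z hz).intervalIntegrable _ _) 0

theorem abs_integral_sub_le (hφ : IsVolterraLipschitz φ T K) {z w : ℝ → ℝ}
    (hz : Continuous z) (hw : Continuous w) {C : ℝ} (hC : 0 ≤ C) {n : ℕ}
    (hzw : ∀ τ ∈ Icc 0 T, |z τ - w τ| ≤ C * (K * τ) ^ n / n.factorial) {t : ℝ}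
    (ht : t ∈ Icc 0 T) :
    |(∫ s in (0 : ℝ)..t, φ z s) - ∫ s in (0 : ℝ)..t, φ w s|
      ≤ C * (K * t) ^ (n + 1) / (n + 1).factorial := by
  have hφz := hφ.continuous z hz
  have hφw := hφ.continuous w hw
  rw [← intervalIntegral.integral_sub (hφz.intervalIntegrable _ _) (hφw.intervalIntegrable _ _),
    ← integral_mul_pow_div_factorial]
  refine (intervalIntegral.abs_integral_le_integral_abs ht.1).trans
    (intervalIntegral.integral_mono_on ht.1 ((hφz.sub hφw).abs.intervalIntegrable _ _)
      (Continuous.intervalIntegrable (by fun_prop) _ _) fun s hs => ?_)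
  have hK := hφ.nonneg
  refine hφ.abs_sub_le z w hz hw s ⟨hs.1, hs.2.trans ht.2⟩ _ fun τ hτ =>
    (hzw τ ⟨hτ.1, hτ.2.trans (hs.2.trans ht.2)⟩).trans ?_
  have := hτ.1
  gcongr
  exact hτ.2

theorem abs_sub_le_of_iterate (hφ : IsVolterraLipschitz φ T K) {z w : ℕ → ℝ → ℝ}
    (hz : ∀ l, Continuous (z l)) (hw : ∀ l, Continuous (w l))
    (hzφ : ∀ l, ∀ t ∈ Icc 0 T, z (l + 1) t = ∫ s in (0 : ℝ)..t, φ (z l) s)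
    (hwφ : ∀ l, ∀ t ∈ Icc 0 T, w (l + 1) t = ∫ s in (0 : ℝ)..t, φ (w l) s)
    {C : ℝ} (hC : 0 ≤ C) (h₀ : ∀ t ∈ Icc 0 T, |z 0 t - w 0 t| ≤ C) (l : ℕ) :
    ∀ t ∈ Icc 0 T, |z l t - w l t| ≤ C * (K * t) ^ l / l.factorial := by
  induction l with
  | zero => simpa using h₀
  | succ l ih =>
    intro t ht
    rw [hzφ l t ht, hwφ l t ht]
    exact hφ.abs_integral_sub_le (hz l) (hw l) hC ih ht

theorem eqOn_of_isFixed (hφ : IsVolterraLipschitz φ T K) {z w : ℝ → ℝ}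
    (hz : Continuous z) (hw : Continuous w)
    (hzφ : ∀ t ∈ Icc 0 T, z t = ∫ s in (0 : ℝ)..t, φ z s)
    (hwφ : ∀ t ∈ Icc 0 T, w t = ∫ s in (0 : ℝ)..t, φ w s) :
    EqOn z w (Icc 0 T) := by
  obtain ⟨C, hC, hzw⟩ := exists_nonneg_abs_sub_le hz hw T
  intro t ht
  have hle := hφ.abs_sub_le_of_iterate (z := fun _ => z) (w := fun _ => w) (fun _ => hz)
    (fun _ => hw) (fun _ => hzφ) (fun _ => hwφ) hC hzw
  have hlim : Tendsto (fun l : ℕ => C * (K * t) ^ l / l.factorial) atTop (𝓝 0) := by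
    simpa [mul_div_assoc] using (FloorSemiring.tendsto_pow_div_factorial_atTop (K * t)).const_mul C
  exact sub_eq_zero.1 (abs_nonpos_iff.1 (ge_of_tendsto' hlim fun l => hle l t ht))

theorem tendsto_integral {ι : Type*} {p : Filter ι} (hφ : IsVolterraLipschitz φ T K)
    {z : ι → ℝ → ℝ} {g : ℝ → ℝ} (hz : ∀ i, Continuous (z i)) (hg : Continuous g)
    (hzg : TendstoUniformlyOn z g p (Icc 0 T)) {t : ℝ} (ht : t ∈ Icc 0 T) :
    Tendsto (fun i => ∫ s in (0 : ℝ)..t, φ (z i) s) p (𝓝 (∫ s in (0 : ℝ)..t, φ g s)) := by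
  have hKt : 0 ≤ K * t := mul_nonneg hφ.nonneg ht.1
  refine Metric.tendsto_nhds.2 fun ε hε => ?_
  filter_upwards [Metric.tendstoUniformlyOn_iff.1 hzg (ε / (K * t + 1)) (by positivity)]
    with i hi
  have hbound := hφ.abs_integral_sub_le (hz i) hg (C := ε / (K * t + 1)) (n := 0)
    (by positivity) (fun τ hτ => by simpa [Real.dist_eq, abs_sub_comm] using (hi τ hτ).le) ht
  rw [Real.dist_eq]
  refine hbound.trans_lt ?_
  rw [zero_add, pow_one, Nat.factorial_one, Nat.cast_one, div_one, div_mul_eq_mul_div,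
    div_lt_iff₀ (by positivity)]
  exact mul_lt_mul_of_pos_left (lt_add_one _) hε

theorem exists_tendstoUniformlyOn_isFixed (hφ : IsVolterraLipschitz φ T K) (hT : 0 ≤ T)
    {z : ℕ → ℝ → ℝ} (hz₀ : Continuous (z 0))
    (hzφ : ∀ l, z (l + 1) = fun t => ∫ s in (0 : ℝ)..t, φ (z l) s) :
    ∃ zs : ℝ → ℝ, Continuous zs ∧ (∀ t ∈ Icc 0 T, zs t = ∫ s in (0 : ℝ)..t, φ zs s) ∧
      TendstoUniformlyOn z zs atTop (Icc 0 T) := by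
  have hz : ∀ l, Continuous (z l) := by
    intro l
    induction l with
    | zero => exact hz₀
    | succ l ih => rw [hzφ l]; exact hφ.continuous_primitive ih
  obtain ⟨C, hC, h₀⟩ := exists_nonneg_abs_sub_le (hz 1) (hz 0) T
  have hstep := hφ.abs_sub_le_of_iterate (z := fun l => z (l + 1)) (w := z) (fun l => hz _) hz
    (fun l t _ => by rw [hzφ]) (fun l t _ => by rw [hzφ]) hC h₀
  obtain ⟨g, hg⟩ := exists_tendstoUniformlyOn_of_norm_sub_le (f := z)
    ((Real.summable_pow_div_factorial (K * T)).mul_left C) fun l t ht =>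
      (Real.norm_eq_abs _).trans_le <| (hstep l t ht).trans (by
        rw [mul_div_assoc]
        have := hφ.nonneg
        have := ht.1
        gcongr
        exact ht.2)
  have hgc : ContinuousOn g (Icc 0 T) :=
    hg.continuousOn (Eventually.of_forall fun l => (hz l).continuousOn).frequently
  set zs := IccExtend hT (domRestrict (Icc 0 T) g)
  have hzsg : EqOn zs g (Icc 0 T) := fun t ht => IccExtend_of_mem hT _ ht
  have hzs : Continuous zs := continuous_IccExtend_iff.2 hgc.domRestrict
  have hzsz := hg.congr_right hzsg.symm
  refine ⟨zs, hzs, fun t ht => ?_, hzsz⟩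
  refine tendsto_nhds_unique ((hzsz.tendsto_at ht).comp (tendsto_add_atTop_nat 1)) ?_
  simpa [Function.comp_def, hzφ] using hφ.tendsto_integral hz hzs hzsz ht

end IsVolterraLipschitz

theorem isVolterraLipschitz_speed {F : Measure (ℝ × ℝ)} [IsFiniteMeasure F] {G : ℝ≥0}
    (hFG : F ≤ (G : ℝ≥0∞) • volume) (Td : Set ℝ) {Xs : Set ℝ} (hXs : volume Xs ≠ ∞)
    {V : ℝ → ℝ} {LV : ℝ≥0} (hV : LipschitzOnWith LV V (Ici 0)) {T : ℝ} (hT : 0 ≤ T) :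
    IsVolterraLipschitz (fun z s => V (F.real (Sset Td Xs z s))) T (LV * (2 * G * T)) where
  nonneg := by positivity
  continuous z hz := hV.continuousOn.comp_continuous (continuous_measureReal_Sset hFG Td hXs hz)
    fun _ => measureReal_nonneg
  abs_sub_le z w hz hw s hs δ hzw := by
    have hδ : 0 ≤ δ := (abs_nonneg _).trans (hzw s ⟨hs.1, le_rfl⟩)
    calc |V (F.real (Sset Td Xs z s)) - V (F.real (Sset Td Xs w s))|
        ≤ LV * |F.real (Sset Td Xs z s) - F.real (Sset Td Xs w s)| := by
          simpa [Real.dist_eq] using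
            hV.dist_le_mul _ (mem_Ici.2 measureReal_nonneg) _ (mem_Ici.2 measureReal_nonneg)
      _ ≤ LV * (2 * G * s * δ) := by
          gcongr; exact abs_measureReal_Sset_sub_le hFG Td hXs hz hw hs.1 hzw
      _ ≤ LV * (2 * G * T) * δ := by
          rw [mul_assoc (LV : ℝ) (2 * G * T)]; gcongr; exact hs.2

theorem picard_iteration_converges_general
    (Tmax Xmin Xmax G : ℝ) (hT : 0 < Tmax)
    (Td Ta : Set ℝ)
    (m : Measure (ℝ × ℝ))
    (V : ℝ → ℝ) (LV : NNReal) (hV : LipschitzOnWith LV V (Set.Ici 0))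
    (F : Measure (ℝ × ℝ)) (hF : memP Td (Set.Icc Xmin Xmax) Ta m G F)
    (z₀ : ℝ → ℝ) (hz₀ : Continuous z₀)
    (zseq : ℕ → ℝ → ℝ) (hzseq0 : zseq 0 = z₀)
    (hzseq : ∀ l : ℕ, zseq (l + 1) = Umap Td (Set.Icc Xmin Xmax) V F (zseq l)) :
    ∃ zs : ℝ → ℝ, Continuous zs ∧
      (∀ t ∈ Set.Icc (0:ℝ) Tmax, zs t = Umap Td (Set.Icc Xmin Xmax) V F zs t) ∧
      (∀ z' : ℝ → ℝ, Continuous z' →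
        (∀ t ∈ Set.Icc (0:ℝ) Tmax, z' t = Umap Td (Set.Icc Xmin Xmax) V F z' t) →
        ∀ t ∈ Set.Icc (0:ℝ) Tmax, z' t = zs t) ∧
      TendstoUniformlyOn (fun l => zseq l) zs Filter.atTop (Set.Icc (0:ℝ) Tmax) := by
  obtain ⟨hFprob, -, hFd, -⟩ := hF
  have hFG : F ≤ (G.toNNReal : ℝ≥0∞) • volume := Measure.le_iff.2 fun B hB => hFd B hB
  have hφ :=
    isVolterraLipschitz_speed hFG Td (Xs := Icc Xmin Xmax) measure_Icc_lt_top.ne hV hT.le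
  obtain ⟨zs, hzs, hfix, hlim⟩ := hφ.exists_tendstoUniformlyOn_isFixed hT.le (hzseq0 ▸ hz₀) hzseq
  exact ⟨zs, hzs, hfix, fun z' hz' hfix' => hφ.eqOn_of_isFixed hz' hzs hfix' hfix, hlim⟩

/-- Corollary 1: Picard iteration. Fix `F ∈ 𝒫_{m,G}` and a Lipschitz
continuous speed function `V : [0,∞) → (0,∞)`. For every starting point `z₀ ∈ C(𝒯)`,
the sequence `z_l := 𝒰(z_{l−1}, F)` converges uniformly on `𝒯` to the unique
`z* ∈ C(𝒯)` satisfying `z*(t) = ∫₀ᵗ V(F(S_s(z*))) ds` for all `t ∈ 𝒯`. -/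
theorem picard_iteration_converges
    (Tmax Xmin Xmax G : ℝ) (hT : 0 < Tmax) (hXmin : 0 < Xmin) (hXX : Xmin < Xmax)
    (hG : 0 < G)
    (Td Ta : Set ℝ) (hTdc : IsCompact Td) (hTd : Td ⊆ Set.Icc 0 Tmax)
    (hTac : IsCompact Ta) (hTa : Ta ⊆ Set.Icc 0 Tmax)
    (m : Measure (ℝ × ℝ)) (hm : IsProbabilityMeasure m)
    (V : ℝ → ℝ) (LV : NNReal) (hV : LipschitzOnWith LV V (Set.Ici 0))
    (hVpos : ∀ c : ℝ, 0 ≤ c → 0 < V c)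
    (F : Measure (ℝ × ℝ)) (hF : memP Td (Set.Icc Xmin Xmax) Ta m G F)
    (z₀ : ℝ → ℝ) (hz₀ : Continuous z₀)
    (zseq : ℕ → ℝ → ℝ) (hzseq0 : zseq 0 = z₀)
    (hzseq : ∀ l : ℕ, zseq (l + 1) = Umap Td (Set.Icc Xmin Xmax) V F (zseq l)) :
    ∃ zs : ℝ → ℝ, Continuous zs ∧
      (∀ t ∈ Set.Icc (0:ℝ) Tmax, zs t = Umap Td (Set.Icc Xmin Xmax) V F zs t) ∧
      (∀ z' : ℝ → ℝ, Continuous z' →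
        (∀ t ∈ Set.Icc (0:ℝ) Tmax, z' t = Umap Td (Set.Icc Xmin Xmax) V F z' t) →
        ∀ t ∈ Set.Icc (0:ℝ) Tmax, z' t = zs t) ∧
      TendstoUniformlyOn (fun l => zseq l) zs Filter.atTop (Set.Icc (0:ℝ) Tmax) :=
  picard_iteration_converges_general Tmax Xmin Xmax G hT Td Ta m V LV hV F hF z₀ hz₀ zseq hzseq0
    hzseq
end
end

section
/- Fix M > 0 such that Λ := 2·G·Lip(V)·(M·T_max − 1 + e^{−M·T_max})/M² < 1. Let F, F′ ∈ 𝒫_{m,G} and let z* and z′* be, respectively, the unique solutions in C(𝒯) of z(t) = ∫₀ᵗ V(F(S_s(z))) ds and z(t) = ∫₀ᵗ V(F′(S_s(z))) ds. Then d_M(z′*, z*) ≤ (Lip(V)/(1 − Λ)) · ∫₀^{T_max} |F(S_s(z*)) − F′(S_s(z*))| ds. -/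
open MeasureTheory Set Filter

noncomputable section

/-!
Subtracting the two fixed-point equations and using the Lipschitz bound on `V`,
`|z′(t) − z(t)| ≤ Lip(V) ∫₀ᵗ |F′(S_s(z′)) − F(S_s(z))| ds`. Passing through `F′(S_s(z))`
splits the integrand into the one of the claimed bound and `|F′(S_s(z′)) − F′(S_s(z))|`, which
is at most `G` times the area of `S_s(z′) ∆ S_s(z)`. Over each departure time `τ ∈ [0, s]` that
region has height at most `|(z′ − z)(s) − (z′ − z)(τ)| ≤ 2 d_M(z′, z) e^{Ms}`. Integrating
`s e^{Ms}` and weighting by `e^{−Mt}` gives `d_M(z′, z) ≤ Λ d_M(z′, z) + Lip(V) ∫₀^{Tmax} …`,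
which is the claim since `Λ < 1`.
-/
open Real
open scoped symmDiff

lemma sub_one_add_exp_neg_le_of_le {x y : ℝ} (hx : 0 ≤ x) (hxy : x ≤ y) :
    x - 1 + exp (-x) ≤ y - 1 + exp (-y) := by
  have hsplit : exp (-y) = exp (-x) * exp (-(y - x)) := by rw [← exp_add]; ring_nf
  have hexp_x : exp (-x) ≤ 1 := exp_le_one_iff.2 (by linarith)
  have hexp_yx : exp (-(y - x)) ≤ 1 := exp_le_one_iff.2 (by linarith)
  nlinarith [add_one_le_exp (-(y - x)), mul_nonneg (sub_nonneg.2 hexp_x) (sub_nonneg.2 hexp_yx)]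

lemma integral_mul_exp_mul {M : ℝ} (hM : M ≠ 0) (t : ℝ) :
    ∫ s in (0:ℝ)..t, s * exp (M * s) = (M * t - 1 + exp (-(M * t))) * exp (M * t) / M ^ 2 := by
  have hderiv : ∀ s ∈ uIcc 0 t,
      HasDerivAt (fun s => (M * s - 1) * exp (M * s) / M ^ 2) (s * exp (M * s)) s := by
    intro s _
    have hlin : HasDerivAt (fun s => M * s) M s := by simpa using (hasDerivAt_id s).const_mul M
    refine (((hlin.sub_const 1).mul hlin.exp).div_const (M ^ 2)).congr_deriv ?_
    field_simp
    ring
  rw [intervalIntegral.integral_eq_sub_of_hasDerivAt hderiv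
    ((Continuous.intervalIntegrable (by fun_prop)) _ _), exp_neg, mul_zero, exp_zero]
  field_simp
  ring

lemma exp_neg_mul_integral_mul_exp_le {M t T : ℝ} (hM : 0 < M) (ht : t ∈ Icc 0 T) :
    exp (-(M * t)) * ∫ s in (0:ℝ)..t, s * exp (M * s)
      ≤ (M * T - 1 + exp (-(M * T))) / M ^ 2 := by
  rw [integral_mul_exp_mul hM.ne', mul_div_assoc', ← mul_assoc, mul_comm _ (_ - _ + _), mul_assoc,
    ← exp_add, neg_add_cancel, exp_zero, mul_one]
  exact div_le_div_of_nonneg_right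
    (sub_one_add_exp_neg_le_of_le (by nlinarith [ht.1]) (by nlinarith [ht.2])) (by positivity)

section WeightedSupDistance

variable {M T : ℝ} {u w : ℝ → ℝ}

lemma exp_neg_mul_abs_sub_le_dM (hu : Continuous u) (hw : Continuous w) {t : ℝ}
    (ht : t ∈ Icc 0 T) : exp (-(M * t)) * |u t - w t| ≤ dM M T u w :=
  le_ciSup (f := fun t : Icc (0:ℝ) T => exp (-(M * t.1)) * |u t.1 - w t.1|)
    (isCompact_range (by fun_prop)).bddAbove ⟨t, ht⟩

lemma abs_sub_le_dM_mul_exp (hu : Continuous u) (hw : Continuous w) {t : ℝ}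
    (ht : t ∈ Icc 0 T) : |u t - w t| ≤ dM M T u w * exp (M * t) := by
  have h := exp_neg_mul_abs_sub_le_dM (M := M) hu hw ht
  rwa [exp_neg, inv_mul_le_iff₀ (exp_pos _), mul_comm] at h

lemma dM_le_of_forall_le {C : ℝ} (hT : 0 ≤ T)
    (h : ∀ t ∈ Icc 0 T, exp (-(M * t)) * |u t - w t| ≤ C) : dM M T u w ≤ C :=
  have : Nonempty (Icc 0 T) := ⟨⟨0, le_rfl, hT⟩⟩
  ciSup_le fun t => h t.1 t.2

end WeightedSupDistance

lemma measurableSet_setOf_mem_uIcc {α : Type*} [MeasurableSpace α] {f g : α → ℝ} {s : Set α}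
    (hf : Measurable f) (hg : Measurable g) (hs : MeasurableSet s) :
    MeasurableSet {p : α × ℝ | p.1 ∈ s ∧ p.2 ∈ uIcc (f p.1) (g p.1)} :=
  measurableSet_region_between_cc (hf.min hg) (hf.max hg) hs

lemma prod_volume_setOf_mem_uIcc_le {α : Type*} [MeasurableSpace α] (μ : Measure α) [SFinite μ]
    {f g : α → ℝ} {s : Set α} {δ : ℝ} (hf : Measurable f) (hg : Measurable g)
    (hs : MeasurableSet s) (hfg : ∀ x ∈ s, |f x - g x| ≤ δ) :
    μ.prod volume {p : α × ℝ | p.1 ∈ s ∧ p.2 ∈ uIcc (f p.1) (g p.1)}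
      ≤ ENNReal.ofReal δ * μ s := by
  rw [Measure.prod_apply (measurableSet_setOf_mem_uIcc hf hg hs),
    ← lintegral_indicator_const hs]
  refine lintegral_mono fun x => ?_
  by_cases hx : x ∈ s
  · simpa [hx, Real.volume_interval, abs_sub_comm] using ENNReal.ofReal_le_ofReal (hfg x hx)
  · simp [hx]

section Sset

variable {Td X : Set ℝ} {z z' : ℝ → ℝ}

lemma measurableSet_setOf_mem_Sset (hTd : MeasurableSet Td) (hX : MeasurableSet X)
    (hz : Continuous z) : MeasurableSet {q : ℝ × (ℝ × ℝ) | q.2 ∈ Sset Td X z q.1} := by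
  unfold Sset
  measurability

lemma measurableSet_Sset (hTd : MeasurableSet Td) (hX : MeasurableSet X) (hz : Continuous z)
    (s : ℝ) : MeasurableSet (Sset Td X z s) :=
  measurable_prodMk_left (measurableSet_setOf_mem_Sset hTd hX hz)

lemma measurable_measure_Sset (hTd : MeasurableSet Td) (hX : MeasurableSet X) (hz : Continuous z)
    (μ : Measure (ℝ × ℝ)) [SFinite μ] : Measurable fun s => μ (Sset Td X z s) :=
  measurable_measure_prodMk_left (measurableSet_setOf_mem_Sset hTd hX hz)

lemma Sset_symmDiff_subset (s : ℝ) :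
    Sset Td X z s ∆ Sset Td X z' s
      ⊆ {p | p.1 ∈ Icc 0 s ∧ p.2 ∈ uIcc (z s - z p.1) (z' s - z' p.1)} := by
  rintro p (⟨⟨hτ, hξ, hξX⟩, hn⟩ | ⟨⟨hτ, hξ, hξX⟩, hn⟩)
  · exact ⟨hτ.1, mem_uIcc_of_le (le_of_lt hξ) (not_lt.1 fun h => hn ⟨hτ, h, hξX⟩)⟩
  · exact ⟨hτ.1, mem_uIcc_of_ge (le_of_lt hξ) (not_lt.1 fun h => hn ⟨hτ, h, hξX⟩)⟩

lemma abs_measureReal_Sset_sub_le_s5 (μ : Measure (ℝ × ℝ)) [IsFiniteMeasure μ] {G : ℝ} (hG : 0 ≤ G)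
    (hμ : ∀ B : Set (ℝ × ℝ), MeasurableSet B → μ B ≤ ENNReal.ofReal G * volume B)
    (hTd : MeasurableSet Td) (hX : MeasurableSet X) (hz : Continuous z) (hz' : Continuous z')
    {s δ : ℝ} (hs : 0 ≤ s) (hδ : ∀ τ ∈ Icc 0 s, |(z s - z τ) - (z' s - z' τ)| ≤ δ) :
    |μ.real (Sset Td X z s) - μ.real (Sset Td X z' s)| ≤ G * (δ * s) := by
  have hδ0 : 0 ≤ δ := (abs_nonneg _).trans (hδ s ⟨hs, le_rfl⟩)
  set R := {p : ℝ × ℝ | p.1 ∈ Icc 0 s ∧ p.2 ∈ uIcc (z s - z p.1) (z' s - z' p.1)}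
  have hRm : MeasurableSet R := measurableSet_setOf_mem_uIcc
    (measurable_const.sub hz.measurable) (measurable_const.sub hz'.measurable) measurableSet_Icc
  have hR : volume R ≤ ENNReal.ofReal (δ * s) := by
    calc volume R ≤ ENNReal.ofReal δ * volume (Icc (0:ℝ) s) := by
          rw [Measure.volume_eq_prod]
          exact prod_volume_setOf_mem_uIcc_le _ (by fun_prop) (by fun_prop) measurableSet_Icc hδ
      _ = ENNReal.ofReal (δ * s) := by rw [Real.volume_Icc, sub_zero, ENNReal.ofReal_mul hδ0]
  refine (abs_measureReal_sub_le_measureReal_symmDiff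
    (measurableSet_Sset hTd hX hz s).nullMeasurableSet
    (measurableSet_Sset hTd hX hz' s).nullMeasurableSet).trans
    (ENNReal.toReal_le_of_le_ofReal (by positivity) ?_)
  calc μ (Sset Td X z s ∆ Sset Td X z' s) ≤ μ R := measure_mono (Sset_symmDiff_subset s)
    _ ≤ ENNReal.ofReal G * volume R := hμ R hRm
    _ ≤ ENNReal.ofReal G * ENNReal.ofReal (δ * s) := by gcongr
    _ = ENNReal.ofReal (G * (δ * s)) := (ENNReal.ofReal_mul hG).symm

lemma abs_measureReal_Sset_sub_le_of_abs_sub_le_exp (μ : Measure (ℝ × ℝ)) [IsFiniteMeasure μ]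
    {G : ℝ} (hG : 0 ≤ G)
    (hμ : ∀ B : Set (ℝ × ℝ), MeasurableSet B → μ B ≤ ENNReal.ofReal G * volume B)
    (hTd : MeasurableSet Td) (hX : MeasurableSet X) (hz : Continuous z) (hz' : Continuous z')
    {M D s : ℝ} (hM : 0 ≤ M) (hs : 0 ≤ s)
    (hD : ∀ τ ∈ Icc 0 s, |z' τ - z τ| ≤ D * exp (M * τ)) :
    |μ.real (Sset Td X z' s) - μ.real (Sset Td X z s)| ≤ 2 * G * D * (s * exp (M * s)) := by
  have hD0 : 0 ≤ D := by simpa using (abs_nonneg _).trans (hD 0 ⟨le_rfl, hs⟩)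
  have hδ : ∀ τ ∈ Icc 0 s, |(z' s - z' τ) - (z s - z τ)| ≤ 2 * D * exp (M * s) := by
    intro τ hτ
    have hexp : exp (M * τ) ≤ exp (M * s) := exp_le_exp.2 (by nlinarith [hτ.2])
    calc |(z' s - z' τ) - (z s - z τ)| = |(z' s - z s) - (z' τ - z τ)| := by ring_nf
      _ ≤ |z' s - z s| + |z' τ - z τ| := abs_sub _ _
      _ ≤ D * exp (M * s) + D * exp (M * τ) := add_le_add (hD s ⟨hs, le_rfl⟩) (hD τ hτ)
      _ ≤ 2 * D * exp (M * s) := by nlinarith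
  calc _ ≤ G * (2 * D * exp (M * s) * s) := abs_measureReal_Sset_sub_le_s5 μ hG hμ hTd hX hz' hz hs hδ
    _ = 2 * G * D * (s * exp (M * s)) := by ring

end Sset

lemma IntervalIntegrable.of_abs_le {f : ℝ → ℝ} (hf : Measurable f) {C : ℝ} (hC : ∀ s, |f s| ≤ C)
    (u v : ℝ) : IntervalIntegrable f volume u v :=
  intervalIntegrable_const.mono_fun' hf.aestronglyMeasurable (Eventually.of_forall hC)

section Lipschitz

variable {V a a' : ℝ → ℝ} {K : NNReal}

lemma intervalIntegrable_comp_of_lipschitzOnWith (hV : LipschitzOnWith K V (Ici 0))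
    (ha : Measurable a) (ha01 : ∀ s, a s ∈ Icc 0 1) (u v : ℝ) :
    IntervalIntegrable (fun s => V (a s)) volume u v := by
  obtain ⟨g, hg, hVg⟩ := hV.extend_real
  obtain ⟨C, hC⟩ := isCompact_Icc.exists_bound_of_continuousOn hg.continuous.continuousOn
  have hVa : (fun s => V (a s)) = fun s => g (a s) := funext fun s => hVg (ha01 s).1
  rw [hVa]
  exact IntervalIntegrable.of_abs_le (hg.continuous.measurable.comp ha) (fun s => hC _ (ha01 s)) u v

lemma abs_integral_comp_sub_le (hV : LipschitzOnWith K V (Ici 0))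
    (ha : Measurable a) (ha01 : ∀ s, a s ∈ Icc 0 1)
    (ha' : Measurable a') (ha'01 : ∀ s, a' s ∈ Icc 0 1) {t : ℝ} (ht : 0 ≤ t) :
    |(∫ s in (0:ℝ)..t, V (a' s)) - ∫ s in (0:ℝ)..t, V (a s)|
      ≤ K * ∫ s in (0:ℝ)..t, |a' s - a s| := by
  have hbound : ∀ s, |(|a' s - a s|)| ≤ 1 := fun s => (abs_abs _).le.trans
    (abs_sub_le_of_nonneg_of_le (ha'01 s).1 (ha'01 s).2 (ha01 s).1 (ha01 s).2)
  have hVa := intervalIntegrable_comp_of_lipschitzOnWith hV ha ha01 0 t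
  have hVa' := intervalIntegrable_comp_of_lipschitzOnWith hV ha' ha'01 0 t
  rw [← intervalIntegral.integral_sub hVa' hVa, ← intervalIntegral.integral_const_mul]
  refine (intervalIntegral.abs_integral_le_integral_abs ht).trans
    (intervalIntegral.integral_mono_on ht (hVa'.sub hVa).abs ?_ fun s _ => ?_)
  · exact (IntervalIntegrable.of_abs_le (ha'.sub ha).abs hbound 0 t).const_mul _
  · simpa only [Real.dist_eq] using hV.dist_le_mul _ (ha'01 s).1 _ (ha01 s).1

end Lipschitz

lemma exp_neg_mul_integral_add_le {M t T c : ℝ} {b : ℝ → ℝ} (hM : 0 < M) (ht : t ∈ Icc 0 T)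
    (hc : 0 ≤ c) (hb : IntervalIntegrable b volume 0 T) (hb0 : ∀ s, 0 ≤ b s) :
    exp (-(M * t)) * ∫ s in (0:ℝ)..t, (c * (s * exp (M * s)) + b s)
      ≤ c * ((M * T - 1 + exp (-(M * T))) / M ^ 2) + ∫ s in (0:ℝ)..T, b s := by
  have hbt : IntervalIntegrable b volume 0 t :=
    hb.mono_set (uIcc_subset_uIcc left_mem_uIcc (mem_uIcc_of_le ht.1 ht.2))
  rw [intervalIntegral.integral_add ((Continuous.intervalIntegrable (by fun_prop)) _ _) hbt,
    intervalIntegral.integral_const_mul, mul_add, mul_left_comm]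
  refine add_le_add (mul_le_mul_of_nonneg_left (exp_neg_mul_integral_mul_exp_le hM ht) hc) ?_
  calc exp (-(M * t)) * ∫ s in (0:ℝ)..t, b s ≤ ∫ s in (0:ℝ)..t, b s :=
        mul_le_of_le_one_left (intervalIntegral.integral_nonneg ht.1 fun s _ => hb0 s)
          (exp_le_one_iff.2 (by nlinarith [ht.1]))
    _ ≤ ∫ s in (0:ℝ)..T, b s :=
        intervalIntegral.integral_mono_interval le_rfl ht.1 ht.2
          (Eventually.of_forall hb0) hb

section CharacteristicTravelDistance

variable {Td X : Set ℝ} {V : ℝ → ℝ} {K : NNReal} {F F' : Measure (ℝ × ℝ)} {z z' : ℝ → ℝ}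
  {G M T : ℝ}

lemma intervalIntegrable_abs_measureReal_Sset_sub (hTd : MeasurableSet Td)
    (hX : MeasurableSet X) (hz : Continuous z) (hz' : Continuous z')
    (μ ν : Measure (ℝ × ℝ)) [IsProbabilityMeasure μ] [IsProbabilityMeasure ν] (u v : ℝ) :
    IntervalIntegrable (fun s => |μ.real (Sset Td X z s) - ν.real (Sset Td X z' s)|) volume u v :=
  IntervalIntegrable.of_abs_le ((measurable_measure_Sset hTd hX hz μ).ennreal_toReal.sub
    (measurable_measure_Sset hTd hX hz' ν).ennreal_toReal).abs
    (fun _ => (abs_abs _).le.trans (abs_sub_le_of_nonneg_of_le measureReal_nonneg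
      measureReal_le_one measureReal_nonneg measureReal_le_one)) u v

variable [IsProbabilityMeasure F] [IsProbabilityMeasure F']

lemma abs_sub_le_integral_of_eq_Umap (hTd : MeasurableSet Td) (hX : MeasurableSet X)
    (hV : LipschitzOnWith K V (Ici 0)) (hz : Continuous z) (hz' : Continuous z')
    (hfix : ∀ t ∈ Icc 0 T, z t = Umap Td X V F z t)
    (hfix' : ∀ t ∈ Icc 0 T, z' t = Umap Td X V F' z' t) {t : ℝ} (ht : t ∈ Icc 0 T) :
    |z' t - z t| ≤ K * ∫ s in (0:ℝ)..t, |F'.real (Sset Td X z' s) - F.real (Sset Td X z s)| := by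
  rw [hfix t ht, hfix' t ht]
  exact abs_integral_comp_sub_le hV (measurable_measure_Sset hTd hX hz F).ennreal_toReal
    (fun _ => ⟨measureReal_nonneg, measureReal_le_one⟩)
    (measurable_measure_Sset hTd hX hz' F').ennreal_toReal
    (fun _ => ⟨measureReal_nonneg, measureReal_le_one⟩) ht.1

lemma exp_neg_mul_abs_sub_le (hTd : MeasurableSet Td) (hX : MeasurableSet X)
    (hV : LipschitzOnWith K V (Ici 0)) (hG : 0 ≤ G)
    (hF'G : ∀ B : Set (ℝ × ℝ), MeasurableSet B → F' B ≤ ENNReal.ofReal G * volume B)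
    (hM : 0 < M) (hz : Continuous z) (hz' : Continuous z')
    (hfix : ∀ t ∈ Icc 0 T, z t = Umap Td X V F z t)
    (hfix' : ∀ t ∈ Icc 0 T, z' t = Umap Td X V F' z' t) {t : ℝ} (ht : t ∈ Icc 0 T) :
    exp (-(M * t)) * |z' t - z t|
      ≤ 2 * G * K * (M * T - 1 + exp (-(M * T))) / M ^ 2 * dM M T z' z
        + K * ∫ s in (0:ℝ)..T, |F.real (Sset Td X z s) - F'.real (Sset Td X z s)| := by
  set D := dM M T z' z
  set b := fun s => |F.real (Sset Td X z s) - F'.real (Sset Td X z s)|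
  have hD0 : 0 ≤ D := (by positivity : (0:ℝ) ≤ exp (-(M * 0)) * |z' 0 - z 0|).trans
    (exp_neg_mul_abs_sub_le_dM hz' hz ⟨le_rfl, ht.1.trans ht.2⟩)
  have hsplit : ∀ s ∈ Icc 0 t, |F'.real (Sset Td X z' s) - F.real (Sset Td X z s)|
      ≤ 2 * G * D * (s * exp (M * s)) + b s := by
    intro s hs
    have hF'moved := abs_measureReal_Sset_sub_le_of_abs_sub_le_exp F' hG hF'G hTd hX hz hz' hM.le
      hs.1 fun τ hτ => abs_sub_le_dM_mul_exp hz' hz ⟨hτ.1, hτ.2.trans (hs.2.trans ht.2)⟩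
    calc _ ≤ |F'.real (Sset Td X z' s) - F'.real (Sset Td X z s)|
          + |F'.real (Sset Td X z s) - F.real (Sset Td X z s)| := abs_sub_le _ _ _
      _ ≤ _ := add_le_add hF'moved (abs_sub_comm _ _).le
  calc exp (-(M * t)) * |z' t - z t|
      ≤ exp (-(M * t)) * (K * ∫ s in (0:ℝ)..t, (2 * G * D * (s * exp (M * s)) + b s)) := by
        gcongr
        refine (abs_sub_le_integral_of_eq_Umap hTd hX hV hz hz' hfix hfix' ht).trans ?_
        gcongr
        exact intervalIntegral.integral_mono_on ht.1
          (intervalIntegrable_abs_measureReal_Sset_sub hTd hX hz' hz F' F 0 t)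
          (((Continuous.intervalIntegrable (by fun_prop)) _ _).add
            (intervalIntegrable_abs_measureReal_Sset_sub hTd hX hz hz F F' 0 t)) hsplit
    _ = K * (exp (-(M * t)) * ∫ s in (0:ℝ)..t, (2 * G * D * (s * exp (M * s)) + b s)) := by ring
    _ ≤ K * (2 * G * D * ((M * T - 1 + exp (-(M * T))) / M ^ 2) + ∫ s in (0:ℝ)..T, b s) := by
        gcongr
        exact exp_neg_mul_integral_add_le hM ht (by positivity)
          (intervalIntegrable_abs_measureReal_Sset_sub hTd hX hz hz F F' 0 T) fun _ => abs_nonneg _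
    _ = _ := by ring

end CharacteristicTravelDistance

theorem characteristic_travel_distance_stability_bound_general
    (Tmax Xmin Xmax G : ℝ) (hT : 0 < Tmax)
    (hG : 0 < G)
    (Td Ta : Set ℝ) (hTdc : IsCompact Td)
    (m : Measure (ℝ × ℝ))
    (V : ℝ → ℝ) (LV : NNReal) (hV : LipschitzOnWith LV V (Set.Ici 0))
    (M : ℝ) (hM : 0 < M)
    (hΛ : 2 * G * (LV : ℝ) * (M * Tmax - 1 + Real.exp (-(M * Tmax))) / M ^ 2 < 1)
    (F F' : Measure (ℝ × ℝ))
    (hF : memP Td (Set.Icc Xmin Xmax) Ta m G F)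
    (hF' : memP Td (Set.Icc Xmin Xmax) Ta m G F')
    (zs zs' : ℝ → ℝ) (hzs : Continuous zs) (hzs' : Continuous zs')
    (hfix : ∀ t ∈ Set.Icc (0:ℝ) Tmax, zs t = Umap Td (Set.Icc Xmin Xmax) V F zs t)
    (hfix' : ∀ t ∈ Set.Icc (0:ℝ) Tmax, zs' t = Umap Td (Set.Icc Xmin Xmax) V F' zs' t) :
    dM M Tmax zs' zs
      ≤ ((LV : ℝ) /
            (1 - 2 * G * (LV : ℝ) * (M * Tmax - 1 + Real.exp (-(M * Tmax))) / M ^ 2))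
          * ∫ s in (0:ℝ)..Tmax,
              |(F (Sset Td (Set.Icc Xmin Xmax) zs s)).toReal
                - (F' (Sset Td (Set.Icc Xmin Xmax) zs s)).toReal| := by
  obtain ⟨hFprob, -, -, -⟩ := hF
  obtain ⟨hF'prob, -, hF'G, -⟩ := hF'
  have hdM := dM_le_of_forall_le hT.le fun t ht => exp_neg_mul_abs_sub_le
    hTdc.measurableSet measurableSet_Icc hV hG.le hF'G hM hzs hzs' hfix hfix' ht
  simp only [measureReal_def] at hdM
  rw [div_mul_eq_mul_div, le_div_iff₀ (by linarith)]
  linarith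

/-- proof of Proposition 4: stability bound for the characteristic
travel distance. If `Λ := 2·G·Lip(V)·(M·Tmax − 1 + e^{−M·Tmax})/M² < 1` and
`z*, z′*` are the characteristic travel distances associated with `F, F′ ∈ 𝒫_{m,G}`,
then `d_M(z′*, z*) ≤ (Lip(V)/(1 − Λ)) · ∫₀^{Tmax} |F(S_s(z*)) − F′(S_s(z*))| ds`. -/
theorem characteristic_travel_distance_stability_bound
    (Tmax Xmin Xmax G : ℝ) (hT : 0 < Tmax) (hXmin : 0 < Xmin) (hXX : Xmin < Xmax)
    (hG : 0 < G)
    (Td Ta : Set ℝ) (hTdc : IsCompact Td) (hTd : Td ⊆ Set.Icc 0 Tmax)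
    (hTac : IsCompact Ta) (hTa : Ta ⊆ Set.Icc 0 Tmax)
    (m : Measure (ℝ × ℝ)) (hm : IsProbabilityMeasure m)
    (V : ℝ → ℝ) (LV : NNReal) (hV : LipschitzOnWith LV V (Set.Ici 0))
    (hVpos : ∀ c : ℝ, 0 ≤ c → 0 < V c)
    (M : ℝ) (hM : 0 < M)
    (hΛ : 2 * G * (LV : ℝ) * (M * Tmax - 1 + Real.exp (-(M * Tmax))) / M ^ 2 < 1)
    (F F' : Measure (ℝ × ℝ))
    (hF : memP Td (Set.Icc Xmin Xmax) Ta m G F)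
    (hF' : memP Td (Set.Icc Xmin Xmax) Ta m G F')
    (zs zs' : ℝ → ℝ) (hzs : Continuous zs) (hzs' : Continuous zs')
    (hfix : ∀ t ∈ Set.Icc (0:ℝ) Tmax, zs t = Umap Td (Set.Icc Xmin Xmax) V F zs t)
    (hfix' : ∀ t ∈ Set.Icc (0:ℝ) Tmax, zs' t = Umap Td (Set.Icc Xmin Xmax) V F' zs' t) :
    dM M Tmax zs' zs
      ≤ ((LV : ℝ) /
            (1 - 2 * G * (LV : ℝ) * (M * Tmax - 1 + Real.exp (-(M * Tmax))) / M ^ 2))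
          * ∫ s in (0:ℝ)..Tmax,
              |(F (Sset Td (Set.Icc Xmin Xmax) zs s)).toReal
                - (F' (Sset Td (Set.Icc Xmin Xmax) zs s)).toReal| :=
  characteristic_travel_distance_stability_bound_general Tmax Xmin Xmax G hT hG Td Ta hTdc m V LV hV
    M hM hΛ F F' hF hF' zs zs' hzs hzs' hfix hfix'
end
end

section
/- Suppose the speed function V is Lipschitz continuous. Let {E_k} be Borel probability measures on 𝒯_d × 𝒳 × 𝒯_a whose marginals ℱ(E_k) on 𝒯_d × 𝒳 belong to 𝒫_{m,G}, and suppose E_k ⇒ E weakly, where ℱ(E) ∈ 𝒫_{m,G}. Let z*_k and z* be the unique solutions in C(𝒯) of z(t) = ∫₀ᵗ V(ℱ(E_k)(S_s(z))) ds and z(t) = ∫₀ᵗ V(ℱ(E)(S_s(z))) ds, respectively. Then z*_k → z* in the uniform norm; that is, the characteristic travel distance is continuous with respect to the dis-aggregated in-flow measure. -/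
/-!
Write `F_k = ℱ(E_k)`, `F = ℱ(E)` and split
`z*_k - z* = (𝒰(z*_k, F_k) - 𝒰(z*, F_k)) + (𝒰(z*, F_k) - 𝒰(z*, F))`.

If `|z - w| ≤ δ` on `[0, t]`, then `S_t(z)` and `S_t(w)` differ only inside a strip of width `4δ`
over `[0, t]`, so the density bound `F ≤ G λ₂` gives `|F(S_t(z)) - F(S_t(w))| ≤ 4Gδt`. Hence the
first term is at most half the weighted distance `dM` with `M = 8 Lip(V) G T + 1`, and
`dM(z*_k, z*)` is at most twice the size of the second term.

The second term tends to `0` by dominated convergence, since `F_k(S_s(z*)) → F(S_s(z*))` by the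
portmanteau theorem: off the null set `(𝒯_d × 𝒳)ᶜ`, `S_s(z*)` agrees with a set whose frontier
lies in two vertical lines and a graph, which is Lebesgue-null and hence `F`-null.
-/

open MeasureTheory Set Filter

noncomputable section

/-- `margF E` is the marginal `ℱ(E)` on `𝒯_d × 𝒳` of a measure `E` on
`𝒯_d × 𝒳 × 𝒯_a`, i.e. `ℱ(E)(A) = E(A × 𝒯_a)`. -/
def margF (E : Measure (ℝ × ℝ × ℝ)) : Measure (ℝ × ℝ) :=
  E.map (fun p => (p.1, p.2.1))

open scoped Topology ENNReal symmDiff Interval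

lemma abs_measureReal_sub_le_of_symmDiff_subset {α : Type*} [MeasurableSpace α] {μ : Measure α}
    [IsFiniteMeasure μ] {s t u : Set α} (h : s ∆ t ⊆ u) :
    |μ.real s - μ.real t| ≤ μ.real u :=
  abs_sub_le_iff.2
    ⟨(le_measureReal_sdiff (μ := μ)).trans (measureReal_mono fun _ hx ↦ h (Or.inl hx)),
      (le_measureReal_sdiff (μ := μ)).trans (measureReal_mono fun _ hx ↦ h (Or.inr hx))⟩

lemma measureReal_le_of_le_smul_volume {α : Type*} [MeasureSpace α]
    {F : Measure α} [IsFiniteMeasure F] {G X : ℝ} (hF : F ≤ ENNReal.ofReal G • volume)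
    (hG : 0 ≤ G) (hX : 0 ≤ X) {R : Set α} (hR : volume R ≤ ENNReal.ofReal X) :
    F.real R ≤ G * X := by
  refine ENNReal.toReal_le_of_le_ofReal (by positivity) ?_
  calc F R ≤ ENNReal.ofReal G * volume R := Measure.le_iff'.1 hF R
    _ ≤ ENNReal.ofReal (G * X) := by rw [ENNReal.ofReal_mul hG]; gcongr

lemma memP.le_smul_volume {Td Xs Ta : Set ℝ} {m : Measure (ℝ × ℝ)} {G : ℝ} {F : Measure (ℝ × ℝ)}
    (h : memP Td Xs Ta m G F) : F ≤ ENNReal.ofReal G • volume :=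
  Measure.le_iff.2 fun B hB ↦ h.2.2.1 B hB

lemma volume_setOf_abs_sub_le {f : ℝ → ℝ} (hf : Measurable f) {A : Set ℝ}
    (hA : MeasurableSet A) (c : ℝ) :
    volume {p : ℝ × ℝ | p.1 ∈ A ∧ |p.2 - f p.1| ≤ c} = ENNReal.ofReal (2 * c) * volume A := by
  have hR : MeasurableSet {p : ℝ × ℝ | p.1 ∈ A ∧ |p.2 - f p.1| ≤ c} :=
    (measurable_fst hA).inter
      (measurableSet_le (by fun_prop : Measurable fun p : ℝ × ℝ ↦ |p.2 - f p.1|) measurable_const)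
  have hslice (τ : ℝ) : volume (Prod.mk τ ⁻¹' {p : ℝ × ℝ | p.1 ∈ A ∧ |p.2 - f p.1| ≤ c}) =
      A.indicator (fun _ ↦ ENNReal.ofReal (2 * c)) τ := by
    by_cases hτ : τ ∈ A
    · rw [indicator_of_mem hτ, ← Real.volume_closedBall (f τ)]
      congr 1
      ext ξ
      simp [hτ, Real.dist_eq]
    · simp [hτ]
  rw [Measure.volume_eq_prod, Measure.prod_apply hR]
  simp_rw [hslice]
  exact lintegral_indicator_const hA _

lemma volume_setOf_eq_eq_zero {f : ℝ → ℝ} (hf : Measurable f) :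
    volume {p : ℝ × ℝ | p.2 = f p.1} = 0 := by
  simpa [sub_eq_zero] using volume_setOf_abs_sub_le hf MeasurableSet.univ 0

lemma volume_preimage_fst_singleton (a : ℝ) : volume (Prod.fst ⁻¹' {a} : Set (ℝ × ℝ)) = 0 := by
  rw [← prod_univ, Measure.volume_eq_prod, Measure.prod_prod]
  simp

lemma volume_frontier_setOf_mem_Icc_lt {f : ℝ → ℝ} (hf : Continuous f) (a b : ℝ) :
    volume (frontier {p : ℝ × ℝ | p.1 ∈ Icc a b ∧ f p.1 < p.2}) = 0 := by
  have hfrontier_inter {s t : Set (ℝ × ℝ)} : frontier (s ∩ t) ⊆ frontier s ∪ frontier t :=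
    (frontier_inter_subset s t).trans (union_subset_union inter_subset_left inter_subset_right)
  have hS : {p : ℝ × ℝ | p.1 ∈ Icc a b ∧ f p.1 < p.2} =
      {p | a ≤ p.1} ∩ {p | p.1 ≤ b} ∩ {p | f p.1 < p.2} := by
    ext p; simp [and_assoc]
  rw [hS]
  refine measure_mono_null (hfrontier_inter.trans (union_subset_union hfrontier_inter le_rfl)) ?_
  refine measure_union_null (measure_union_null ?_ ?_) ?_
  · exact measure_mono_null
      (fun p hp ↦ (frontier_le_subset_eq continuous_const continuous_fst hp).symm)
      (volume_preimage_fst_singleton a)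
  · exact measure_mono_null (frontier_le_subset_eq continuous_fst continuous_const)
      (volume_preimage_fst_singleton b)
  · exact measure_mono_null
      (fun p hp ↦ (frontier_lt_subset_eq (hf.comp continuous_fst) continuous_snd hp).symm)
      (volume_setOf_eq_eq_zero hf.measurable)

lemma Sset_symmDiff_subset_s7 {Td Xs : Set ℝ} {z w : ℝ → ℝ} {s t c : ℝ} (hst : s ≤ t)
    (h : ∀ τ ∈ Icc 0 t, |z t - w s - z τ + w τ| ≤ c) :
    Sset Td Xs z t ∆ Sset Td Xs w s ⊆
      Icc s t ×ˢ Xs ∪ {p | p.1 ∈ Icc 0 t ∧ |p.2 - (z t - z p.1)| ≤ c} := by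
  rintro ⟨τ, ξ⟩ (⟨⟨⟨hτ, hτd⟩, hξz, hξX⟩, hB⟩ | ⟨⟨⟨hτ, hτd⟩, hξw, hξX⟩, hA⟩)
  · by_cases hτs : τ ≤ s
    · have hξw : ξ ≤ w s - w τ := by
        by_contra! hξw
        exact hB ⟨⟨⟨hτ.1, hτs⟩, hτd⟩, hξw, hξX⟩
      have := abs_le.1 (h τ hτ)
      refine Or.inr ⟨hτ, abs_le.2 ⟨?_, ?_⟩⟩ <;> simp only [mem_Ioi] at hξz <;> linarith
    · exact Or.inl ⟨⟨(not_le.1 hτs).le, hτ.2⟩, hξX⟩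
  · have hτt : τ ∈ Icc 0 t := ⟨hτ.1, hτ.2.trans hst⟩
    have hξz : ξ ≤ z t - z τ := by
      by_contra! hξz
      exact hA ⟨⟨hτt, hτd⟩, hξz, hξX⟩
    have := abs_le.1 (h τ hτt)
    refine Or.inr ⟨hτt, abs_le.2 ⟨?_, ?_⟩⟩ <;> simp only [mem_Ioi] at hξw <;> linarith

section WeightedDistance

variable {M T : ℝ} {u w : ℝ → ℝ}

lemma abs_sub_le_exp_mul_dM (hu : ContinuousOn u (Icc 0 T)) (hw : ContinuousOn w (Icc 0 T))
    {t : ℝ} (ht : t ∈ Icc 0 T) : |u t - w t| ≤ Real.exp (M * t) * dM M T u w := by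
  have hcont : Continuous fun t : Icc (0 : ℝ) T ↦ Real.exp (-(M * t.1)) * |u t.1 - w t.1| :=
    (by fun_prop : Continuous fun t : Icc (0 : ℝ) T ↦ Real.exp (-(M * t.1))).mul
      (hu.domRestrict.sub hw.domRestrict).abs
  calc |u t - w t| = Real.exp (M * t) * (Real.exp (-(M * t)) * |u t - w t|) := by
        rw [← mul_assoc, ← Real.exp_add, add_neg_cancel, Real.exp_zero, one_mul]
    _ ≤ Real.exp (M * t) * dM M T u w := by
        gcongr
        exact le_ciSup (isCompact_range hcont).bddAbove (⟨t, ht⟩ : Icc (0 : ℝ) T)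

lemma dM_nonneg (hu : ContinuousOn u (Icc 0 T)) (hw : ContinuousOn w (Icc 0 T)) (hT : 0 ≤ T) :
    0 ≤ dM M T u w := by
  simpa using (abs_nonneg _).trans (abs_sub_le_exp_mul_dM (M := M) hu hw ⟨le_rfl, hT⟩)

lemma dM_le {C : ℝ} (hT : 0 ≤ T) (h : ∀ t ∈ Icc 0 T, Real.exp (-(M * t)) * |u t - w t| ≤ C) :
    dM M T u w ≤ C :=
  have : Nonempty (Icc (0 : ℝ) T) := ⟨⟨0, le_rfl, hT⟩⟩
  ciSup_le fun t ↦ h t t.2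

end WeightedDistance

lemma integral_exp_mul_le {M : ℝ} (hM : 0 < M) (t : ℝ) :
    ∫ s in 0..t, Real.exp (M * s) ≤ Real.exp (M * t) / M := by
  rw [intervalIntegral.integral_comp_mul_left (fun x ↦ Real.exp x) hM.ne', integral_exp, mul_zero,
    Real.exp_zero, smul_eq_mul, inv_mul_eq_div]
  gcongr
  linarith

section DensityBounded

variable {Td : Set ℝ} {Xmin Xmax G : ℝ} {F : Measure (ℝ × ℝ)} [IsFiniteMeasure F]

lemma abs_measureReal_Sset_sub_le_s7 (hF : F ≤ ENNReal.ofReal G • volume) (hG : 0 ≤ G)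
    (hX : Xmin ≤ Xmax)    {z w : ℝ → ℝ} (hz : Measurable z) {s t c : ℝ} (hs : 0 ≤ s) (hst : s ≤ t)
    (h : ∀ τ ∈ Icc 0 t, |z t - w s - z τ + w τ| ≤ c) :
    |F.real (Sset Td (Icc Xmin Xmax) z t) - F.real (Sset Td (Icc Xmin Xmax) w s)| ≤
      G * ((t - s) * (Xmax - Xmin) + 2 * c * t) := by
  have ht : 0 ≤ t := hs.trans hst
  have hc : 0 ≤ c := (abs_nonneg _).trans (h t ⟨ht, le_rfl⟩)
  refine (abs_measureReal_sub_le_of_symmDiff_subset (Sset_symmDiff_subset_s7 hst h)).trans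
    (measureReal_le_of_le_smul_volume hF hG (by nlinarith) ((measure_union_le _ _).trans ?_))
  have hstrip := volume_setOf_abs_sub_le (f := fun τ ↦ z t - z τ) (by fun_prop)
    (measurableSet_Icc (a := 0) (b := t)) c
  beta_reduce at hstrip
  rw [Measure.volume_eq_prod, Measure.prod_prod, ← Measure.volume_eq_prod, hstrip,
    Real.volume_Icc, Real.volume_Icc, Real.volume_Icc, sub_zero,
    ← ENNReal.ofReal_mul (by linarith), ← ENNReal.ofReal_mul (by linarith),
    ← ENNReal.ofReal_add (by nlinarith) (by positivity)]

lemma abs_measureReal_Sset_sub_Sset_le (hF : F ≤ ENNReal.ofReal G • volume) (hG : 0 ≤ G)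
    (hX : Xmin ≤ Xmax) {z : ℝ → ℝ} (hz : Measurable z) {x y : ℝ} (hx : 0 ≤ x) (hy : 0 ≤ y) :
    |F.real (Sset Td (Icc Xmin Xmax) z y) - F.real (Sset Td (Icc Xmin Xmax) z x)| ≤
      G * (|y - x| * (Xmax - Xmin) + 2 * |z y - z x| * max x y) := by
  wlog hxy : x ≤ y generalizing x y
  · rw [abs_sub_comm, abs_sub_comm y, abs_sub_comm (z y), max_comm]
    exact this hy hx (le_of_not_ge hxy)
  rw [abs_of_nonneg (sub_nonneg.2 hxy), max_eq_right hxy]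
  exact abs_measureReal_Sset_sub_le_s7 hF hG hX hz hx hxy fun τ _ ↦ by rw [sub_add_cancel]

lemma continuousOn_measureReal_Sset (hF : F ≤ ENNReal.ofReal G • volume) (hG : 0 ≤ G)
    (hX : Xmin ≤ Xmax) {z : ℝ → ℝ} (hz : Continuous z) :
    ContinuousOn (fun t ↦ F.real (Sset Td (Icc Xmin Xmax) z t)) (Ici 0) := by
  intro x hx
  rw [ContinuousWithinAt, tendsto_iff_dist_tendsto_zero]
  have hbound : Tendsto (fun y ↦ G * (|y - x| * (Xmax - Xmin) + 2 * |z y - z x| * max x y))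
      (𝓝[Ici 0] x) (𝓝 0) := by
    have hcont : Continuous fun y ↦ G * (|y - x| * (Xmax - Xmin) + 2 * |z y - z x| * max x y) := by
      fun_prop
    simpa using (hcont.tendsto x).mono_left nhdsWithin_le_nhds
  refine squeeze_zero' (Eventually.of_forall fun _ ↦ dist_nonneg) ?_ hbound
  filter_upwards [self_mem_nhdsWithin] with y hy
  exact abs_measureReal_Sset_sub_Sset_le hF hG hX hz.measurable hx hy

lemma continuousOn_comp_measureReal_Sset (hF : F ≤ ENNReal.ofReal G • volume) (hG : 0 ≤ G)
    (hX : Xmin ≤ Xmax)    {V : ℝ → ℝ} {LV : NNReal} (hV : LipschitzOnWith LV V (Ici 0)) {z : ℝ → ℝ}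
    (hz : Continuous z) :
    ContinuousOn (fun t ↦ V (F.real (Sset Td (Icc Xmin Xmax) z t))) (Ici 0) :=
  hV.continuousOn.comp (continuousOn_measureReal_Sset hF hG hX hz) fun _ _ ↦ measureReal_nonneg

lemma abs_measureReal_Sset_sub_le_exp_mul_dM (hF : F ≤ ENNReal.ofReal G • volume) (hG : 0 ≤ G)
    (hX : Xmin ≤ Xmax) {z₁ z₂ : ℝ → ℝ} (hz₁ : Continuous z₁) (hz₂ : Continuous z₂) {M T s : ℝ}
    (hM : 0 ≤ M) (hs : s ∈ Icc 0 T) :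
    |F.real (Sset Td (Icc Xmin Xmax) z₁ s) - F.real (Sset Td (Icc Xmin Xmax) z₂ s)| ≤
      4 * G * T * (Real.exp (M * s) * dM M T z₁ z₂) := by
  set d := dM M T z₁ z₂
  have hd : 0 ≤ d := dM_nonneg hz₁.continuousOn hz₂.continuousOn (hs.1.trans hs.2)
  have hosc (τ : ℝ) (hτ : τ ∈ Icc 0 s) :
      |z₁ s - z₂ s - z₁ τ + z₂ τ| ≤ 2 * Real.exp (M * s) * d := by
    have h₁ := abs_sub_le_exp_mul_dM (M := M) hz₁.continuousOn hz₂.continuousOn hs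
    have h₂ := abs_sub_le_exp_mul_dM (M := M) hz₁.continuousOn hz₂.continuousOn
      ⟨hτ.1, hτ.2.trans hs.2⟩
    have h₃ : Real.exp (M * τ) ≤ Real.exp (M * s) := by gcongr; exact hτ.2
    calc |z₁ s - z₂ s - z₁ τ + z₂ τ| = |(z₁ s - z₂ s) - (z₁ τ - z₂ τ)| := by congr 1; ring
      _ ≤ |z₁ s - z₂ s| + |z₁ τ - z₂ τ| := abs_sub _ _
      _ ≤ 2 * Real.exp (M * s) * d := by nlinarith
  calc _ ≤ G * ((s - s) * (Xmax - Xmin) + 2 * (2 * Real.exp (M * s) * d) * s) :=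
        abs_measureReal_Sset_sub_le_s7 hF hG hX hz₁.measurable hs.1 le_rfl hosc
    _ ≤ 4 * G * T * (Real.exp (M * s) * d) := by
        have : 0 ≤ G * (Real.exp (M * s) * d) := by positivity
        nlinarith [hs.2]

end DensityBounded

lemma tendsto_measureReal_Sset {ι : Type*} {L : Filter ι} {μs : ι → ProbabilityMeasure (ℝ × ℝ)}
    {μ : ProbabilityMeasure (ℝ × ℝ)} (hμs : Tendsto μs L (𝓝 μ)) {Td Xs : Set ℝ}
    (hsupp : ∀ i, (μs i : Measure (ℝ × ℝ)) (Td ×ˢ Xs)ᶜ = 0)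
    (hμsupp : (μ : Measure (ℝ × ℝ)) (Td ×ˢ Xs)ᶜ = 0) (hμ : (μ : Measure (ℝ × ℝ)) ≪ volume)
    {z : ℝ → ℝ} (hz : Continuous z) (s : ℝ) :
    Tendsto (fun i ↦ (μs i : Measure (ℝ × ℝ)).real (Sset Td Xs z s)) L
      (𝓝 ((μ : Measure (ℝ × ℝ)).real (Sset Td Xs z s))) := by
  -- `Td` is arbitrary, so the frontier of `Sset` itself can be large; that of `S` is null.
  set S := {p : ℝ × ℝ | p.1 ∈ Icc 0 s ∧ z s - z p.1 < p.2}
  have hSset : Sset Td Xs z s = S ∩ Td ×ˢ Xs := by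
    ext p; simp only [Sset, S, mem_ofPred_eq, mem_inter_iff, mem_Ioi, mem_prod]; tauto
  have hfront : (μ : Measure (ℝ × ℝ)) (frontier S) = 0 :=
    hμ (volume_frontier_setOf_mem_Icc_lt (continuous_const.sub hz) 0 s)
  simp only [hSset, measureReal_def, measure_inter_conull (hsupp _), measure_inter_conull hμsupp]
  exact (ENNReal.tendsto_toReal (measure_ne_top _ _)).comp
    (ProbabilityMeasure.tendsto_measure_of_null_frontier_of_tendsto' hμs hfront)

lemma tendsto_integral_abs_sub_comp_measureReal_Sset {ι : Type*} {L : Filter ι}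
    [L.IsCountablyGenerated] {μs : ι → ProbabilityMeasure (ℝ × ℝ)} {μ : ProbabilityMeasure (ℝ × ℝ)}
    (hμs : Tendsto μs L (𝓝 μ)) {Td : Set ℝ} {Xmin Xmax G : ℝ} (hG : 0 ≤ G) (hX : Xmin ≤ Xmax)
    (hsupp : ∀ i, (μs i : Measure (ℝ × ℝ)) (Td ×ˢ Icc Xmin Xmax)ᶜ = 0)
    (hμsupp : (μ : Measure (ℝ × ℝ)) (Td ×ˢ Icc Xmin Xmax)ᶜ = 0)
    (hFs : ∀ i, (μs i : Measure (ℝ × ℝ)) ≤ ENNReal.ofReal G • volume)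
    (hF : (μ : Measure (ℝ × ℝ)) ≤ ENNReal.ofReal G • volume)
    {V : ℝ → ℝ} {LV : NNReal} (hV : LipschitzOnWith LV V (Ici 0)) {z : ℝ → ℝ}
    (hz : Continuous z) {T : ℝ} (hT : 0 ≤ T) :
    Tendsto (fun i ↦ ∫ s in 0..T, |V ((μs i : Measure (ℝ × ℝ)).real (Sset Td (Icc Xmin Xmax) z s))
      - V ((μ : Measure (ℝ × ℝ)).real (Sset Td (Icc Xmin Xmax) z s))|) L (𝓝 0) := by
  set a : ι → ℝ → ℝ := fun i s ↦ (μs i : Measure (ℝ × ℝ)).real (Sset Td (Icc Xmin Xmax) z s)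
  set b : ℝ → ℝ := fun s ↦ (μ : Measure (ℝ × ℝ)).real (Sset Td (Icc Xmin Xmax) z s)
  have hcont (ν : Measure (ℝ × ℝ)) [IsFiniteMeasure ν] (hν : ν ≤ ENNReal.ofReal G • volume) :
      ContinuousOn (fun t ↦ V (ν.real (Sset Td (Icc Xmin Xmax) z t))) (Ι 0 T) :=
    (continuousOn_comp_measureReal_Sset hν hG hX hV hz).mono
      (by rw [uIoc_of_le hT]; exact Ioc_subset_Ioi_self.trans Ioi_subset_Ici_self)
  have hmeas : ∀ i, AEStronglyMeasurable (fun s ↦ |V (a i s) - V (b s)|)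
      (volume.restrict (Ι 0 T)) := fun i ↦
    (((hcont _ (hFs i)).sub (hcont _ hF)).abs).aestronglyMeasurable measurableSet_uIoc
  have hbound (i : ι) (s : ℝ) : ‖|V (a i s) - V (b s)|‖ ≤ LV := by
    have hab : |a i s - b s| ≤ 1 := abs_sub_le_of_nonneg_of_le measureReal_nonneg
      measureReal_le_one measureReal_nonneg measureReal_le_one
    calc ‖|V (a i s) - V (b s)|‖ = dist (V (a i s)) (V (b s)) := by rw [norm_abs_eq_norm]; rfl
      _ ≤ LV * |a i s - b s| := hV.dist_le_mul _ measureReal_nonneg _ measureReal_nonneg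
      _ ≤ LV := mul_le_of_le_one_right LV.2 hab
  have hlim (s : ℝ) : Tendsto (fun i ↦ |V (a i s) - V (b s)|) L (𝓝 0) := by
    have ha : Tendsto (fun i ↦ a i s) L (𝓝[Ici 0] b s) := tendsto_nhdsWithin_iff.2
      ⟨tendsto_measureReal_Sset hμs hsupp hμsupp (Measure.absolutelyContinuous_of_le_smul hF) hz s,
        Eventually.of_forall fun _ ↦ measureReal_nonneg⟩
    have := (((hV.continuousOn _ measureReal_nonneg).tendsto.comp ha).sub_const (V (b s))).abs
    rwa [sub_self, abs_zero] at this
  simpa only [intervalIntegral.integral_zero] using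
    intervalIntegral.tendsto_integral_filter_of_dominated_convergence (fun _ ↦ (LV : ℝ))
    (Eventually.of_forall hmeas) (Eventually.of_forall fun i ↦ ae_of_all _ fun s _ ↦ hbound i s)
    intervalIntegrable_const (ae_of_all _ fun s _ ↦ hlim s)

section Stability

variable {Td : Set ℝ} {Xmin Xmax G T : ℝ} {F₁ F₂ : Measure (ℝ × ℝ)} [IsFiniteMeasure F₁]
  [IsFiniteMeasure F₂] {V : ℝ → ℝ} {LV : NNReal} {z₁ z₂ : ℝ → ℝ}

lemma exp_neg_mul_abs_sub_le_of_eq_Umap (hF₁ : F₁ ≤ ENNReal.ofReal G • volume)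
    (hF₂ : F₂ ≤ ENNReal.ofReal G • volume) (hG : 0 ≤ G) (hX : Xmin ≤ Xmax)
    (hV : LipschitzOnWith LV V (Ici 0)) (hz₁ : Continuous z₁) (hz₂ : Continuous z₂)
    (hz₁fix : ∀ t ∈ Icc 0 T, z₁ t = Umap Td (Icc Xmin Xmax) V F₁ z₁ t)
    (hz₂fix : ∀ t ∈ Icc 0 T, z₂ t = Umap Td (Icc Xmin Xmax) V F₂ z₂ t) {t : ℝ}
    (ht : t ∈ Icc 0 T) :
    Real.exp (-((8 * LV * G * T + 1) * t)) * |z₁ t - z₂ t| ≤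
      dM (8 * LV * G * T + 1) T z₁ z₂ / 2 + ∫ s in 0..T, |V (F₁.real (Sset Td (Icc Xmin Xmax) z₂ s))
        - V (F₂.real (Sset Td (Icc Xmin Xmax) z₂ s))| := by
  set M := 8 * LV * G * T + 1
  set d := dM M T z₁ z₂
  set ε := ∫ s in 0..T,
    |V (F₁.real (Sset Td (Icc Xmin Xmax) z₂ s)) - V (F₂.real (Sset Td (Icc Xmin Xmax) z₂ s))|
  set g₁ := fun s ↦ V (F₁.real (Sset Td (Icc Xmin Xmax) z₁ s))
  set g₁₂ := fun s ↦ V (F₁.real (Sset Td (Icc Xmin Xmax) z₂ s))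
  set g₂ := fun s ↦ V (F₂.real (Sset Td (Icc Xmin Xmax) z₂ s))
  have hT : 0 ≤ T := ht.1.trans ht.2
  have hM : 0 < M := by positivity
  have hd : 0 ≤ d := dM_nonneg hz₁.continuousOn hz₂.continuousOn hT
  have hint {a : ℝ} (ha : 0 ≤ a) {g : ℝ → ℝ} (hg : ContinuousOn g (Ici 0)) :
      IntervalIntegrable g volume 0 a :=
    (hg.mono (by rw [uIcc_of_le ha]; exact Icc_subset_Ici_self)).intervalIntegrable
  have hg₁ := continuousOn_comp_measureReal_Sset (Td := Td) hF₁ hG hX hV hz₁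
  have hg₁₂ := continuousOn_comp_measureReal_Sset (Td := Td) hF₁ hG hX hV hz₂
  have hg₂ := continuousOn_comp_measureReal_Sset (Td := Td) hF₂ hG hX hV hz₂
  have hsplit : z₁ t - z₂ t = (∫ s in 0..t, (g₁ s - g₁₂ s)) + ∫ s in 0..t, (g₁₂ s - g₂ s) := by
    rw [intervalIntegral.integral_sub (hint ht.1 hg₁) (hint ht.1 hg₁₂),
      intervalIntegral.integral_sub (hint ht.1 hg₁₂) (hint ht.1 hg₂), sub_add_sub_cancel,
      hz₁fix t ht, hz₂fix t ht]
    rfl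
  have hfirst : |∫ s in 0..t, (g₁ s - g₁₂ s)| ≤ 4 * LV * G * T * d * (Real.exp (M * t) / M) :=
    calc |∫ s in 0..t, (g₁ s - g₁₂ s)|
        ≤ ∫ s in 0..t, LV * (4 * G * T * (Real.exp (M * s) * d)) := by
          rw [← Real.norm_eq_abs]
          refine intervalIntegral.norm_integral_le_of_norm_le ht.1
            (ae_of_all _ fun s hs ↦ ?_) (Continuous.intervalIntegrable (by fun_prop) _ _)
          refine (hV.dist_le_mul _ measureReal_nonneg _ measureReal_nonneg).trans ?_
          gcongr
          exact abs_measureReal_Sset_sub_le_exp_mul_dM hF₁ hG hX hz₁ hz₂ hM.le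
            ⟨hs.1.le, hs.2.trans ht.2⟩
      _ = 4 * LV * G * T * d * ∫ s in 0..t, Real.exp (M * s) := by
          rw [← intervalIntegral.integral_const_mul]
          congr 1 with s
          ring
      _ ≤ 4 * LV * G * T * d * (Real.exp (M * t) / M) := by
          gcongr
          exact integral_exp_mul_le hM t
  have hsecond : |∫ s in 0..t, (g₁₂ s - g₂ s)| ≤ ε :=
    (intervalIntegral.abs_integral_le_integral_abs ht.1).trans
      (intervalIntegral.integral_mono_interval le_rfl ht.1 ht.2
        (ae_of_all _ fun _ ↦ abs_nonneg _) (hint hT (hg₁₂.sub hg₂).abs))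
  have hε : 0 ≤ ε := intervalIntegral.integral_nonneg hT fun _ _ ↦ abs_nonneg _
  have hcontract : 4 * LV * G * T * d * (Real.exp (M * t) / M) ≤ d / 2 * Real.exp (M * t) := by
    rw [mul_div_assoc', div_le_iff₀ hM]
    have : 0 ≤ d * Real.exp (M * t) := by positivity
    nlinarith
  have hexp : Real.exp (-(M * t)) * Real.exp (M * t) = 1 := by
    rw [← Real.exp_add, neg_add_cancel, Real.exp_zero]
  have hexp_le : Real.exp (-(M * t)) ≤ 1 := Real.exp_le_one_iff.2 (by nlinarith [ht.1])
  calc Real.exp (-(M * t)) * |z₁ t - z₂ t|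
      ≤ Real.exp (-(M * t)) * (d / 2 * Real.exp (M * t) + ε) := by
        gcongr
        rw [hsplit]
        exact (abs_add_le _ _).trans (by linarith)
    _ = d / 2 + Real.exp (-(M * t)) * ε := by linear_combination (d / 2) * hexp
    _ ≤ d / 2 + ε := by gcongr; exact mul_le_of_le_one_left hε hexp_le

theorem abs_sub_le_of_eq_Umap (hF₁ : F₁ ≤ ENNReal.ofReal G • volume)
    (hF₂ : F₂ ≤ ENNReal.ofReal G • volume) (hG : 0 ≤ G) (hX : Xmin ≤ Xmax)
    (hV : LipschitzOnWith LV V (Ici 0)) (hz₁ : Continuous z₁) (hz₂ : Continuous z₂)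
    (hz₁fix : ∀ t ∈ Icc 0 T, z₁ t = Umap Td (Icc Xmin Xmax) V F₁ z₁ t)
    (hz₂fix : ∀ t ∈ Icc 0 T, z₂ t = Umap Td (Icc Xmin Xmax) V F₂ z₂ t) {t : ℝ}
    (ht : t ∈ Icc 0 T) :
    |z₁ t - z₂ t| ≤ 2 * Real.exp ((8 * LV * G * T + 1) * T) *
      ∫ s in 0..T, |V (F₁.real (Sset Td (Icc Xmin Xmax) z₂ s))
        - V (F₂.real (Sset Td (Icc Xmin Xmax) z₂ s))| := by
  set M := 8 * LV * G * T + 1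
  set ε := ∫ s in 0..T,
    |V (F₁.real (Sset Td (Icc Xmin Xmax) z₂ s)) - V (F₂.real (Sset Td (Icc Xmin Xmax) z₂ s))|
  have hT : 0 ≤ T := ht.1.trans ht.2
  have hd₀ : 0 ≤ dM M T z₁ z₂ := dM_nonneg hz₁.continuousOn hz₂.continuousOn hT
  have hd : dM M T z₁ z₂ ≤ 2 * ε := by
    have := dM_le hT fun s hs ↦
      exp_neg_mul_abs_sub_le_of_eq_Umap hF₁ hF₂ hG hX hV hz₁ hz₂ hz₁fix hz₂fix hs
    linarith
  calc |z₁ t - z₂ t| ≤ Real.exp (M * t) * dM M T z₁ z₂ :=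
        abs_sub_le_exp_mul_dM hz₁.continuousOn hz₂.continuousOn ht
    _ ≤ Real.exp (M * T) * (2 * ε) := by
        gcongr
        exact ht.2
    _ = 2 * Real.exp (M * T) * ε := by ring

end Stability

lemma tendstoUniformlyOn_of_dist_le {ι α β : Type*} [PseudoMetricSpace β] {F : ι → α → β}
    {f : α → β} {L : Filter ι} {s : Set α} {b : ι → ℝ} (hb : Tendsto b L (𝓝 0))
    (h : ∀ᶠ i in L, ∀ x ∈ s, dist (F i x) (f x) ≤ b i) : TendstoUniformlyOn F f L s :=
  Metric.tendstoUniformlyOn_iff.2 fun _ hε ↦ (h.and (hb.eventually (gt_mem_nhds hε))).mono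
    fun _ hi x hx ↦ (dist_comm _ _).trans_le (hi.1 x hx) |>.trans_lt hi.2

theorem characteristic_travel_distance_continuous_in_E_general
    (Tmax Xmin Xmax G : ℝ) (hT : 0 < Tmax) (hXX : Xmin < Xmax)
    (hG : 0 < G)
    (Td Ta : Set ℝ)
    (m : Measure (ℝ × ℝ))
    (V : ℝ → ℝ) (LV : NNReal) (hV : LipschitzOnWith LV V (Set.Ici 0))
    (Ek : ℕ → ProbabilityMeasure (ℝ × ℝ × ℝ)) (E : ProbabilityMeasure (ℝ × ℝ × ℝ))
    (hEk : ∀ k, memP Td (Set.Icc Xmin Xmax) Ta m G (margF (Ek k : Measure (ℝ × ℝ × ℝ))))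
    (hEmem : memP Td (Set.Icc Xmin Xmax) Ta m G (margF (E : Measure (ℝ × ℝ × ℝ))))
    (hconv : Filter.Tendsto Ek Filter.atTop (nhds E))
    (zk : ℕ → ℝ → ℝ) (zs : ℝ → ℝ)
    (hzk : ∀ k, Continuous (zk k))
    (hzkfix : ∀ k, ∀ t ∈ Set.Icc (0:ℝ) Tmax,
      zk k t = Umap Td (Set.Icc Xmin Xmax) V (margF (Ek k : Measure (ℝ × ℝ × ℝ))) (zk k) t)
    (hzs : Continuous zs)
    (hzsfix : ∀ t ∈ Set.Icc (0:ℝ) Tmax,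
      zs t = Umap Td (Set.Icc Xmin Xmax) V (margF (E : Measure (ℝ × ℝ × ℝ))) zs t) :
    TendstoUniformlyOn (fun k => zk k) zs Filter.atTop (Set.Icc (0:ℝ) Tmax) := by
  have hπ : Continuous fun p : ℝ × ℝ × ℝ ↦ (p.1, p.2.1) := by fun_prop
  have hmarg : Tendsto (fun k ↦ (Ek k).map hπ.aemeasurable) atTop (𝓝 (E.map hπ.aemeasurable)) :=
    ProbabilityMeasure.tendsto_map_of_tendsto_of_continuous _ _ hconv hπ
  have hε := tendsto_integral_abs_sub_comp_measureReal_Sset hmarg hG.le hXX.le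
    (fun k ↦ (hEk k).2.1) hEmem.2.1 (fun k ↦ (hEk k).le_smul_volume) hEmem.le_smul_volume hV hzs
    hT.le
  refine tendstoUniformlyOn_of_dist_le
    (by simpa only [mul_zero] using hε.const_mul (2 * Real.exp ((8 * LV * G * Tmax + 1) * Tmax)))
    (Eventually.of_forall fun k t ht ↦ ?_)
  have : IsProbabilityMeasure (margF (Ek k : Measure (ℝ × ℝ × ℝ))) := (hEk k).1
  have : IsProbabilityMeasure (margF (E : Measure (ℝ × ℝ × ℝ))) := hEmem.1
  exact abs_sub_le_of_eq_Umap (hEk k).le_smul_volume hEmem.le_smul_volume hG.le hXX.le hV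
    (hzk k) hzs (hzkfix k) hzsfix ht

/-- Corollary 2: continuity of the characteristic travel distance with
respect to the dis-aggregated in-flow measure. If `V` is Lipschitz, `E_k ⇒ E` weakly
with `ℱ(E_k), ℱ(E) ∈ 𝒫_{m,G}`, and `z*_k, z*` are the characteristic travel distances
associated with `ℱ(E_k), ℱ(E)`, then `z*_k → z*` uniformly on `𝒯`. -/
theorem characteristic_travel_distance_continuous_in_E
    (Tmax Xmin Xmax G : ℝ) (hT : 0 < Tmax) (hXmin : 0 < Xmin) (hXX : Xmin < Xmax)
    (hG : 0 < G)
    (Td Ta : Set ℝ) (hTdc : IsCompact Td) (hTd : Td ⊆ Set.Icc 0 Tmax)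
    (hTac : IsCompact Ta) (hTa : Ta ⊆ Set.Icc 0 Tmax)
    (m : Measure (ℝ × ℝ)) (hm : IsProbabilityMeasure m)
    (V : ℝ → ℝ) (LV : NNReal) (hV : LipschitzOnWith LV V (Set.Ici 0))
    (hVpos : ∀ c : ℝ, 0 ≤ c → 0 < V c)
    (Ek : ℕ → ProbabilityMeasure (ℝ × ℝ × ℝ)) (E : ProbabilityMeasure (ℝ × ℝ × ℝ))
    (hEk : ∀ k, memP Td (Set.Icc Xmin Xmax) Ta m G (margF (Ek k : Measure (ℝ × ℝ × ℝ))))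
    (hEmem : memP Td (Set.Icc Xmin Xmax) Ta m G (margF (E : Measure (ℝ × ℝ × ℝ))))
    (hconv : Filter.Tendsto Ek Filter.atTop (nhds E))
    (zk : ℕ → ℝ → ℝ) (zs : ℝ → ℝ)
    (hzk : ∀ k, Continuous (zk k))
    (hzkfix : ∀ k, ∀ t ∈ Set.Icc (0:ℝ) Tmax,
      zk k t = Umap Td (Set.Icc Xmin Xmax) V (margF (Ek k : Measure (ℝ × ℝ × ℝ))) (zk k) t)
    (hzs : Continuous zs)
    (hzsfix : ∀ t ∈ Set.Icc (0:ℝ) Tmax,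
      zs t = Umap Td (Set.Icc Xmin Xmax) V (margF (E : Measure (ℝ × ℝ × ℝ))) zs t) :
    TendstoUniformlyOn (fun k => zk k) zs Filter.atTop (Set.Icc (0:ℝ) Tmax) :=
  characteristic_travel_distance_continuous_in_E_general Tmax Xmin Xmax G hT hXX hG Td Ta m V LV hV
    Ek E hEk hEmem hconv zk zs hzk hzkfix hzs hzsfix
end
end
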